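/- Let α ≥ 0, r ≥ 0, δ > 1 and β ∈ [0,1]. Then there exists a constant C such that for all t ≥ 1 and k ∈ ℝ, e^{|k|(t−1)} ∫_t^∞ e^{−|k|(s−1)} |k|^β s^{−δ} μ_{α,r}(k,s) ds ≤ C t^{−(δ−1+β)} μ_{α,r}(k,t). -/

import Mathlib

open MeasureTheory

noncomputable def mu (α r k t : ℝ) : ℝ := 1 / (1 + (|k| * t ^ r) ^ α)

/-!
Since `μ(k, ·)` is nonincreasing, the left side is at most
`μ(k, t) |k|^β ∫_t^∞ e^{-|k|(s-t)} s^{-δ} ds`. The damped tail integral is bounded both by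
`t^{1-δ}/(δ-1)` (drop the exponential) and by `t^{-δ}/|k|` (freeze `s^{-δ}` at `s = t`); the
first bound wins when `|k| t ≤ 1`, the second otherwise, and in either regime `|k|^β` times it is
`O(t^{1-δ-β})`.
-/

open Set Real

lemma mu_nonneg (α r k : ℝ) {t : ℝ} (ht : 0 ≤ t) : 0 ≤ mu α r k t := by
  have := rpow_nonneg (mul_nonneg (abs_nonneg k) (rpow_nonneg ht r)) α
  unfold mu
  positivity

lemma mu_antitoneOn {α r : ℝ} (hα : 0 ≤ α) (hr : 0 ≤ r) (k : ℝ) :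
    AntitoneOn (mu α r k) (Ici 0) := by
  intro t ht s _ hts
  have h0 : 0 ≤ |k| * t ^ r := mul_nonneg (abs_nonneg k) (rpow_nonneg ht r)
  unfold mu
  gcongr

section DampedTail

variable {K δ t : ℝ}

lemma exp_neg_mul_sub (K t s : ℝ) : exp (-(K * (s - t))) = exp (K * t) * exp (-K * s) := by
  rw [← exp_add]; ring_nf

lemma integrableOn_exp_neg_mul_sub (hK : 0 < K) (t : ℝ) :
    IntegrableOn (fun s => exp (-(K * (s - t)))) (Ioi t) := by
  simp_rw [exp_neg_mul_sub K t]
  exact (exp_neg_integrableOn_Ioi t hK).const_mul _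

lemma integral_Ioi_exp_neg_mul_sub (hK : 0 < K) (t : ℝ) :
    ∫ s in Ioi t, exp (-(K * (s - t))) = 1 / K := by
  simp_rw [exp_neg_mul_sub K t]
  rw [integral_const_mul, integral_exp_mul_Ioi (neg_lt_zero.2 hK), neg_div_neg_eq,
    ← mul_div_assoc, ← exp_add]
  simp

lemma integrableOn_exp_neg_mul_sub_mul_rpow (hK : 0 ≤ K) (hδ : 1 < δ) (ht : 0 < t) :
    IntegrableOn (fun s => exp (-(K * (s - t))) * s ^ (-δ)) (Ioi t) := by
  refine (integrableOn_Ioi_rpow_of_lt (a := -δ) (by linarith) ht).mono' (by fun_prop) ?_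
  filter_upwards [ae_restrict_mem measurableSet_Ioi] with s hs
  have hs0 : 0 < s := ht.trans hs
  rw [norm_mul, norm_of_nonneg (exp_pos _).le, norm_of_nonneg (rpow_nonneg hs0.le _)]
  exact mul_le_of_le_one_left (rpow_nonneg hs0.le _)
    (exp_le_one_iff.2 (neg_nonpos.2 (mul_nonneg hK (sub_nonneg.2 hs.le))))

lemma setIntegral_exp_neg_mul_sub_mul_rpow_le_rpow (hK : 0 ≤ K) (hδ : 1 < δ) (ht : 0 < t) :
    ∫ s in Ioi t, exp (-(K * (s - t))) * s ^ (-δ) ≤ t ^ (1 - δ) / (δ - 1) := by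
  calc ∫ s in Ioi t, exp (-(K * (s - t))) * s ^ (-δ)
      ≤ ∫ s in Ioi t, s ^ (-δ) := by
        refine setIntegral_mono_on (integrableOn_exp_neg_mul_sub_mul_rpow hK hδ ht)
          (integrableOn_Ioi_rpow_of_lt (a := -δ) (by linarith) ht) measurableSet_Ioi fun s hs => ?_
        exact mul_le_of_le_one_left (rpow_nonneg (ht.trans hs).le _)
          (exp_le_one_iff.2 (neg_nonpos.2 (mul_nonneg hK (sub_nonneg.2 (le_of_lt hs)))))
    _ = t ^ (1 - δ) / (δ - 1) := by
        rw [integral_Ioi_rpow_of_lt (by linarith) ht, ← neg_div_neg_eq]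
        ring_nf

lemma setIntegral_exp_neg_mul_sub_mul_rpow_le_div (hK : 0 < K) (hδ : 1 < δ) (ht : 0 < t) :
    ∫ s in Ioi t, exp (-(K * (s - t))) * s ^ (-δ) ≤ t ^ (-δ) / K := by
  calc ∫ s in Ioi t, exp (-(K * (s - t))) * s ^ (-δ)
      ≤ ∫ s in Ioi t, exp (-(K * (s - t))) * t ^ (-δ) := by
        refine setIntegral_mono_on (integrableOn_exp_neg_mul_sub_mul_rpow hK.le hδ ht)
          ((integrableOn_exp_neg_mul_sub hK t).mul_const _) measurableSet_Ioi fun s hs => ?_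
        exact mul_le_mul_of_nonneg_left
          (rpow_le_rpow_of_nonpos ht (le_of_lt hs) (by linarith)) (exp_pos _).le
    _ = t ^ (-δ) / K := by
        rw [integral_mul_const, integral_Ioi_exp_neg_mul_sub hK]
        ring

lemma rpow_mul_setIntegral_exp_neg_mul_sub_mul_rpow_le {β : ℝ} (hK : 0 ≤ K) (hδ : 1 < δ)
    (hβ0 : 0 ≤ β) (hβ1 : β ≤ 1) (ht : 0 < t) :
    K ^ β * ∫ s in Ioi t, exp (-(K * (s - t))) * s ^ (-δ)
      ≤ (1 / (δ - 1) + 1) * t ^ (-(δ - 1 + β)) := by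
  have hI : 0 ≤ ∫ s in Ioi t, exp (-(K * (s - t))) * s ^ (-δ) :=
    setIntegral_nonneg measurableSet_Ioi fun s hs =>
      mul_nonneg (exp_pos _).le (rpow_nonneg (ht.trans hs).le _)
  have hC : 0 ≤ 1 / (δ - 1) := by rw [one_div_nonneg]; linarith
  rcases le_or_gt (K * t) 1 with hKt | hKt
  · have hKβ : K ^ β ≤ t ^ (-β) := by
      rw [rpow_neg ht.le, ← inv_rpow ht.le]
      exact rpow_le_rpow hK (by rwa [← one_div, le_div_iff₀ ht]) hβ0
    calc K ^ β * ∫ s in Ioi t, exp (-(K * (s - t))) * s ^ (-δ)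
        ≤ t ^ (-β) * (t ^ (1 - δ) / (δ - 1)) :=
          mul_le_mul hKβ (setIntegral_exp_neg_mul_sub_mul_rpow_le_rpow hK hδ ht) hI
            (rpow_nonneg ht.le _)
      _ = 1 / (δ - 1) * t ^ (-(δ - 1 + β)) := by
          rw [mul_div_assoc', ← rpow_add ht]; ring_nf
      _ ≤ (1 / (δ - 1) + 1) * t ^ (-(δ - 1 + β)) := by
          gcongr
          linarith
  · have hK0 : 0 < K := by nlinarith
    have hKβ : K ^ (β - 1) ≤ t ^ (1 - β) := by
      rw [← neg_sub, rpow_neg hK, ← inv_rpow hK]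
      exact rpow_le_rpow (inv_nonneg.2 hK) (by rw [inv_le_iff_one_le_mul₀ hK0]; linarith)
        (by linarith)
    calc K ^ β * ∫ s in Ioi t, exp (-(K * (s - t))) * s ^ (-δ)
        ≤ K ^ β * (t ^ (-δ) / K) := by
          gcongr
          exact setIntegral_exp_neg_mul_sub_mul_rpow_le_div hK0 hδ ht
      _ = K ^ (β - 1) * t ^ (-δ) := by
          rw [rpow_sub_one hK0.ne']; ring
      _ ≤ t ^ (1 - β) * t ^ (-δ) := by gcongr
      _ = 1 * t ^ (-(δ - 1 + β)) := by
          rw [← rpow_add ht]; ring_nf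
      _ ≤ (1 / (δ - 1) + 1) * t ^ (-(δ - 1 + β)) := by
          gcongr
          linarith

end DampedTail

lemma exp_mul_integrand_le {α r : ℝ} (hα : 0 ≤ α) (hr : 0 ≤ r) (β δ k : ℝ) {t s : ℝ}
    (ht : 0 < t) (hts : t ≤ s) :
    exp (|k| * (t - 1)) * (exp (-|k| * (s - 1)) * |k| ^ β * s ^ (-δ) * mu α r k s)
      ≤ mu α r k t * (|k| ^ β * (exp (-(|k| * (s - t))) * s ^ (-δ))) := by
  have hs : 0 < s := ht.trans_le hts
  have hexp : exp (|k| * (t - 1)) * exp (-|k| * (s - 1)) = exp (-(|k| * (s - t))) := by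
    rw [← exp_add]; ring_nf
  calc exp (|k| * (t - 1)) * (exp (-|k| * (s - 1)) * |k| ^ β * s ^ (-δ) * mu α r k s)
      = mu α r k s * (|k| ^ β * (exp (-(|k| * (s - t))) * s ^ (-δ))) := by
        rw [← hexp]; ring
    _ ≤ mu α r k t * (|k| ^ β * (exp (-(|k| * (s - t))) * s ^ (-δ))) :=
        mul_le_mul_of_nonneg_right (mu_antitoneOn hα hr k ht.le hs.le hts)
          (mul_nonneg (rpow_nonneg (abs_nonneg k) β)
            (mul_nonneg (exp_pos _).le (rpow_nonneg hs.le _)))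

theorem semigroup_abs_k_integral_bound (α r δ β : ℝ)
    (hα : 0 ≤ α) (hr : 0 ≤ r) (hδ : 1 < δ) (hβ0 : 0 ≤ β) (hβ1 : β ≤ 1) :
    ∃ C : ℝ, ∀ t k : ℝ, 1 ≤ t →
      Real.exp (|k| * (t - 1)) *
          ∫ s in Set.Ioi t, Real.exp (-|k| * (s - 1)) * |k| ^ β * s ^ (-δ) * mu α r k s
        ≤ C * t ^ (-(δ - 1 + β)) * mu α r k t := by
  refine ⟨1 / (δ - 1) + 1, fun t k ht => ?_⟩
  have ht0 : 0 < t := by linarith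
  have hnonneg : ∀ s ∈ Ioi t,
      0 ≤ exp (|k| * (t - 1)) * (exp (-|k| * (s - 1)) * |k| ^ β * s ^ (-δ) * mu α r k s) :=
    fun s hs => by
      have := mu_nonneg α r k (ht0.trans hs).le
      have := rpow_nonneg (ht0.trans hs).le (-δ)
      have := rpow_nonneg (abs_nonneg k) β
      positivity
  rw [← integral_const_mul]
  calc ∫ s in Ioi t,
        exp (|k| * (t - 1)) * (exp (-|k| * (s - 1)) * |k| ^ β * s ^ (-δ) * mu α r k s)
      ≤ ∫ s in Ioi t, mu α r k t * (|k| ^ β * (exp (-(|k| * (s - t))) * s ^ (-δ))) :=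
        integral_mono_of_nonneg ((ae_restrict_iff' measurableSet_Ioi).2 (.of_forall hnonneg))
          (((integrableOn_exp_neg_mul_sub_mul_rpow (abs_nonneg k) hδ ht0).const_mul _).const_mul _)
          ((ae_restrict_iff' measurableSet_Ioi).2 (.of_forall fun s hs =>
            exp_mul_integrand_le hα hr β δ k ht0 (le_of_lt hs)))
    _ = mu α r k t * (|k| ^ β * ∫ s in Ioi t, exp (-(|k| * (s - t))) * s ^ (-δ)) := by
        rw [integral_const_mul, integral_const_mul]
    _ ≤ mu α r k t * ((1 / (δ - 1) + 1) * t ^ (-(δ - 1 + β))) :=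
        mul_le_mul_of_nonneg_left
          (rpow_mul_setIntegral_exp_neg_mul_sub_mul_rpow_le (abs_nonneg k) hδ hβ0 hβ1 ht0)
          (mu_nonneg α r k ht0.le)
    _ = (1 / (δ - 1) + 1) * t ^ (-(δ - 1 + β)) * mu α r k t := by ring
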